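/- (Correctness of SLP-II score elimination) Let G be a simple graph with adjacency matrix A on N vertices, and fix a query vertex v with degree d = Σ_k A[v][k]. Define masked scores s'_u = score(v,u) + b_{v,u}, where score(v,u) = Σ_k A[v][k]·A[u][k], and b_{v,u} is chosen with d < b_{v,u} < N − d if A[v][u] = 1 and b_{v,u} = 0 otherwise. Then for every vertex u ≠ v: s'_u ≤ d if and only if u is not adjacent to v. Consequently, among vertices u with s'_u ≤ d, the vertex maximizing s'_u is a vertex not adjacent to v with maximum common-neighbor score. -/
import Mathlib


/-- Correctness of SLP-II score elimination: a masked score is at most the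
degree of the queried vertex iff the vertex is not adjacent to it, and hence
the maximizer among the small masked scores is a non-adjacent vertex of
maximum common-neighbor score. -/
theorem slp2_score_elimination {N : ℕ} (A : Fin N → Fin N → ℕ)
    (h01 : ∀ i j, A i j = 0 ∨ A i j = 1) (v : Fin N)
    (d : ℕ) (hd : d = ∑ k, A v k)
    (score : Fin N → ℕ) (hscore : ∀ u, score u = ∑ k, A v k * A u k)
    (b : Fin N → ℕ)
    (hb1 : ∀ u, A v u = 1 → d < b u ∧ b u < N - d)
    (hb0 : ∀ u, A v u = 0 → b u = 0)
    (hdN : d < N - d) :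
    (∀ u, u ≠ v → (score u + b u ≤ d ↔ A v u = 0)) ∧
    (∀ u, u ≠ v → score u + b u ≤ d →
      (∀ w, w ≠ v → score w + b w ≤ d → score w + b w ≤ score u + b u) →
      A v u = 0 ∧ ∀ w, w ≠ v → A v w = 0 → score w ≤ score u) := by
  have hsd : ∀ u, score u ≤ d := by
    intro u
    rw [hscore, hd]
    apply Finset.sum_le_sum
    intro k _
    rcases h01 u k with h | h <;> simp [h]
  have key : ∀ u, u ≠ v → (score u + b u ≤ d ↔ A v u = 0) := by
    intro u _
    constructor
    · intro h
      rcases h01 v u with h0 | h1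
      · exact h0
      · exact absurd h (by have := (hb1 u h1).1; omega)
    · intro h0
      rw [hb0 u h0]
      simpa using hsd u
  refine ⟨key, fun u hu hle hmax => ⟨(key u hu).mp hle, fun w hw hw0 => ?_⟩⟩
  have h1 := hmax w hw (by rw [key w hw]; exact hw0)
  have h2 := hb0 w hw0
  have h3 := hb0 u ((key u hu).mp hle)
  omega
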